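/- arXiv:2508.19400 — 2 statements merged into one kernel-verified Lean document; each statement's English description precedes it below -/
import Mathlib

section
/- Let f : ℝ^D → ℝ be twice continuously differentiable with γ_H-Lipschitz Hessian. Given two distinct points xᵢ, xⱼ ∈ ℝ^D with noisy evaluations zᵢ = f(xᵢ) + εᵢ and zⱼ = f(xⱼ) + εⱼ where |εᵢ| ≤ ε̄ and |εⱼ| ≤ ε̄, the noisy directional slope g̃ᵢⱼ = (zⱼ − zᵢ)/μᵢⱼ satisfies |g̃ᵢⱼ − ⟨∇f(xᵢ), uᵢⱼ⟩| ≤ (1/2)·μᵢⱼ·‖H(xᵢ)‖ + (1/6)·μᵢⱼ²·γ_H + 2ε̄/μᵢⱼ. -/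
/-!
Along the segment `t ↦ f (x + t • d)` the second derivative is `H(x + t • d)[d, d]`, which the
Lipschitz bound on the Hessian controls by `‖H x‖ ‖d‖² + γ ‖d‖³ t` for `t ≥ 0`. Integrating this
twice (by the comparison principle for derivatives) bounds the first-order Taylor remainder by
`‖H x‖ ‖d‖² / 2 + γ ‖d‖³ / 6`. Dividing by `μ = ‖d‖` gives the first two terms, and the noise
contributes `|εⱼ - εᵢ| / μ ≤ 2 ε̄ / μ`.
-/

theorem abs_le_of_forall_abs_hasDerivAt_le {g g' B B' : ℝ → ℝ}
    (hg : ∀ t, HasDerivAt g (g' t) t) (hB : ∀ t, HasDerivAt B (B' t) t)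
    (h0 : |g 0| ≤ B 0) (hle : ∀ t, 0 ≤ t → |g' t| ≤ B' t) {t : ℝ} (ht : 0 ≤ t) :
    |g t| ≤ B t :=
  image_norm_le_of_norm_deriv_right_le_deriv_boundary (a := 0) (b := t)
    (fun s _ => (hg s).continuousAt.continuousWithinAt) (fun s _ => (hg s).hasDerivWithinAt)
    h0 hB (fun s hs => hle s hs.1) ⟨ht, le_rfl⟩

theorem abs_sub_sub_mul_deriv_le_of_abs_deriv2_le {φ φ' φ'' : ℝ → ℝ} {A K : ℝ}
    (hφ : ∀ t, HasDerivAt φ (φ' t) t) (hφ' : ∀ t, HasDerivAt φ' (φ'' t) t)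
    (hφ'' : ∀ t, 0 ≤ t → |φ'' t| ≤ A + K * t) {t : ℝ} (ht : 0 ≤ t) :
    |φ t - φ 0 - t * φ' 0| ≤ A * t ^ 2 / 2 + K * t ^ 3 / 6 := by
  have hslope : ∀ s, 0 ≤ s → |φ' s - φ' 0| ≤ A * s + K * s ^ 2 / 2 := fun s hs =>
    abs_le_of_forall_abs_hasDerivAt_le (fun s => (hφ' s).sub_const (φ' 0))
      (fun s => (((hasDerivAt_id s).const_mul A).add
        (((hasDerivAt_pow 2 s).const_mul K).div_const 2)).congr_deriv (by ring))
      (by simp) hφ'' hs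
  refine abs_le_of_forall_abs_hasDerivAt_le
    (fun s => ((hφ s).sub_const (φ 0)).sub ((hasDerivAt_id s).mul_const (φ' 0)))
    (fun s => (((hasDerivAt_pow 2 s).const_mul A).div_const 2).add
        (((hasDerivAt_pow 3 s).const_mul K).div_const 6)) (by simp) (fun s hs => ?_) ht
  convert hslope s hs using 1
  · rw [one_mul]
  · ring

section LineRestriction

variable {E F : Type*} [NormedAddCommGroup E] [NormedSpace ℝ E]
  [NormedAddCommGroup F] [NormedSpace ℝ F]

theorem hasDerivAt_comp_add_smul {g : E → F} (hg : Differentiable ℝ g) (x d : E) (t : ℝ) :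
    HasDerivAt (fun s : ℝ => g (x + s • d)) (fderiv ℝ g (x + t • d) d) t :=
  (hg _).hasFDerivAt.comp_hasDerivAt t
    ((((hasDerivAt_id t).smul_const d).const_add x).congr_deriv (one_smul ℝ d))

theorem hasDerivAt_fderiv_comp_add_smul {f : E → F} (hf : ContDiff ℝ 2 f) (x d : E) (t : ℝ) :
    HasDerivAt (fun s : ℝ => fderiv ℝ f (x + s • d) d)
      (iteratedFDeriv ℝ 2 f (x + t • d) ![d, d]) t := by
  rw [iteratedFDeriv_two_apply]
  exact (ContinuousLinearMap.apply ℝ F d).hasFDerivAt.comp_hasDerivAt t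
    (hasDerivAt_comp_add_smul ((hf.fderiv_right le_rfl).differentiable one_ne_zero) x d t)

theorem ContinuousMultilinearMap.norm_apply_vecCons_vecCons_le
    (M : ContinuousMultilinearMap ℝ (fun _ : Fin 2 => E) F) (d : E) :
    ‖M ![d, d]‖ ≤ ‖M‖ * ‖d‖ ^ 2 := by
  simpa [Fin.prod_univ_two, sq] using M.le_opNorm ![d, d]

theorem norm_iteratedFDeriv_two_add_smul_le {f : E → F} {γ : ℝ}
    (hLip : ∀ x₁ x₂, ‖iteratedFDeriv ℝ 2 f x₁ - iteratedFDeriv ℝ 2 f x₂‖ ≤ γ * ‖x₁ - x₂‖)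
    (x d : E) {t : ℝ} (ht : 0 ≤ t) :
    ‖iteratedFDeriv ℝ 2 f (x + t • d) ![d, d]‖ ≤
      ‖iteratedFDeriv ℝ 2 f x‖ * ‖d‖ ^ 2 + γ * ‖d‖ ^ 3 * t := by
  set H := iteratedFDeriv ℝ 2 f
  have hincr : ‖(H (x + t • d) - H x) ![d, d]‖ ≤ γ * ‖d‖ ^ 3 * t := calc
    _ ≤ ‖H (x + t • d) - H x‖ * ‖d‖ ^ 2 := (H (x + t • d) - H x).norm_apply_vecCons_vecCons_le d
    _ ≤ γ * ‖(x + t • d) - x‖ * ‖d‖ ^ 2 := by gcongr; exact hLip _ _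
    _ = γ * ‖d‖ ^ 3 * t := by
      rw [add_sub_cancel_left, norm_smul, Real.norm_of_nonneg ht]; ring
  calc ‖H (x + t • d) ![d, d]‖ = ‖H x ![d, d] + (H (x + t • d) - H x) ![d, d]‖ := by
        rw [sub_apply, add_sub_cancel]
    _ ≤ _ := (norm_add_le _ _).trans (add_le_add ((H x).norm_apply_vecCons_vecCons_le d) hincr)

theorem abs_sub_sub_fderiv_le_of_lipschitz_iteratedFDeriv_two {f : E → ℝ} (hf : ContDiff ℝ 2 f)
    {γ : ℝ}
    (hLip : ∀ x₁ x₂, ‖iteratedFDeriv ℝ 2 f x₁ - iteratedFDeriv ℝ 2 f x₂‖ ≤ γ * ‖x₁ - x₂‖)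
    (x y : E) :
    |f y - f x - fderiv ℝ f x (y - x)| ≤
      1 / 2 * ‖y - x‖ ^ 2 * ‖iteratedFDeriv ℝ 2 f x‖ + 1 / 6 * ‖y - x‖ ^ 3 * γ := by
  have h := abs_sub_sub_mul_deriv_le_of_abs_deriv2_le
    (hasDerivAt_comp_add_smul (hf.differentiable two_ne_zero) x (y - x))
    (hasDerivAt_fderiv_comp_add_smul hf x (y - x))
    (fun t ht => norm_iteratedFDeriv_two_add_smul_le hLip x (y - x) ht) zero_le_one
  simp only [one_smul, zero_smul, add_zero, add_sub_cancel, one_mul, one_pow, mul_one] at h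
  linarith

end LineRestriction

theorem sage_directional_slope_accuracy_noisy_general
    {D : ℕ}
    (f : EuclideanSpace ℝ (Fin D) → ℝ)
    (hf : ContDiff ℝ 2 f)
    (γH : ℝ)
    (hLip : ∀ x₁ x₂ : EuclideanSpace ℝ (Fin D),
      ‖iteratedFDeriv ℝ 2 f x₁ - iteratedFDeriv ℝ 2 f x₂‖ ≤ γH * ‖x₁ - x₂‖)
    (xi xj : EuclideanSpace ℝ (Fin D)) (hne : xi ≠ xj)
    (εbar εi εj zi zj : ℝ)
    (hzi : zi = f xi + εi) (hzj : zj = f xj + εj)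
    (hεi : |εi| ≤ εbar) (hεj : |εj| ≤ εbar) :
    |(zj - zi) / ‖xj - xi‖ -
        (inner ℝ (gradient f xi) ((‖xj - xi‖)⁻¹ • (xj - xi)) : ℝ)| ≤
      (1 / 2) * ‖xj - xi‖ * ‖iteratedFDeriv ℝ 2 f xi‖ +
        (1 / 6) * ‖xj - xi‖ ^ 2 * γH + 2 * εbar / ‖xj - xi‖ := by
  have hμ : ‖xj - xi‖ ≠ 0 := norm_ne_zero_iff.2 (sub_ne_zero.2 hne.symm)
  have htaylor := abs_sub_sub_fderiv_le_of_lipschitz_iteratedFDeriv_two hf hLip xi xj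
  have hnoise : |εj - εi| ≤ 2 * εbar := (abs_sub _ _).trans (by linarith)
  rw [real_inner_smul_right, inner_gradient_left, hzi, hzj]
  calc _ = |((f xj - f xi - fderiv ℝ f xi (xj - xi)) + (εj - εi)) / ‖xj - xi‖| := by
        congr 1; field_simp; ring
    _ = |(f xj - f xi - fderiv ℝ f xi (xj - xi)) + (εj - εi)| / ‖xj - xi‖ := by
        rw [abs_div, abs_norm]
    _ ≤ (1 / 2 * ‖xj - xi‖ ^ 2 * ‖iteratedFDeriv ℝ 2 f xi‖ + 1 / 6 * ‖xj - xi‖ ^ 3 * γH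
          + 2 * εbar) / ‖xj - xi‖ := by
        gcongr; exact (abs_add_le _ _).trans (add_le_add htaylor hnoise)
    _ = _ := by field_simp

/-- Accuracy of the two-sample directional slope with bounded
additive noise (Lemma 2 of the paper). -/
theorem sage_directional_slope_accuracy_noisy
    {D : ℕ} (hD : 1 ≤ D)
    (f : EuclideanSpace ℝ (Fin D) → ℝ)
    (hf : ContDiff ℝ 2 f)
    (γH : ℝ) (hγH : 0 ≤ γH)
    (hLip : ∀ x₁ x₂ : EuclideanSpace ℝ (Fin D),
      ‖iteratedFDeriv ℝ 2 f x₁ - iteratedFDeriv ℝ 2 f x₂‖ ≤ γH * ‖x₁ - x₂‖)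
    (xi xj : EuclideanSpace ℝ (Fin D)) (hne : xi ≠ xj)
    (εbar εi εj zi zj : ℝ) (hεbar : 0 ≤ εbar)
    (hzi : zi = f xi + εi) (hzj : zj = f xj + εj)
    (hεi : |εi| ≤ εbar) (hεj : |εj| ≤ εbar) :
    |(zj - zi) / ‖xj - xi‖ -
        (inner ℝ (gradient f xi) ((‖xj - xi‖)⁻¹ • (xj - xi)) : ℝ)| ≤
      (1 / 2) * ‖xj - xi‖ * ‖iteratedFDeriv ℝ 2 f xi‖ +
        (1 / 6) * ‖xj - xi‖ ^ 2 * γH + 2 * εbar / ‖xj - xi‖ :=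
  sage_directional_slope_accuracy_noisy_general f hf γH hLip xi xj hne εbar εi εj zi zj hzi hzj hεi
    hεj
end

section
/- Let f : ℝ^D → ℝ be twice continuously differentiable with γ_H-Lipschitz Hessian, and let xᵢ, xⱼ ∈ ℝ^D be distinct with noiseless values. If a vector g ∈ ℝ^D belongs to the gradient slab determined by the pair, i.e. |g̃ᵢⱼ − ⟨g, uᵢⱼ⟩| ≤ (1/2)·μᵢⱼ·‖H(xᵢ)‖ + (1/6)·μᵢⱼ²·γ_H, then its directional error with respect to the true gradient satisfies |⟨g − ∇f(xᵢ), uᵢⱼ⟩| ≤ μᵢⱼ·‖H(xᵢ)‖ + (1/3)·μᵢⱼ²·γ_H. -/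
/-!
Along the segment from `xᵢ` to `xⱼ` the Hessian differs from `H(xᵢ)` by at most `γ_H μᵢⱼ`, so
integrating twice bounds the second-order Taylor remainder by
`½ μᵢⱼ² ‖H(xᵢ)‖ + ⅙ μᵢⱼ³ γ_H`. Dividing by `μᵢⱼ`, the true gradient itself lies in the slab;
the triangle inequality through `g̃ᵢⱼ` then doubles the half-width.
-/

open Set

section TaylorRemainder

variable {E F : Type*} [NormedAddCommGroup E] [NormedSpace ℝ E]
  [NormedAddCommGroup F] [NormedSpace ℝ F]

theorem norm_sub_sub_deriv_le_of_norm_deriv2_le {φ φ' φ'' : ℝ → F} {A B : ℝ}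
    (hφ : ∀ t, HasDerivAt φ (φ' t) t) (hφ' : ∀ t, HasDerivAt φ' (φ'' t) t)
    (hφ'' : ∀ t ∈ Icc (0 : ℝ) 1, ‖φ'' t‖ ≤ A + B * t) :
    ‖φ 1 - φ 0 - φ' 0‖ ≤ A / 2 + B / 6 := by
  have hderiv : ∀ t ∈ Icc (0 : ℝ) 1, ‖φ' t - φ' 0‖ ≤ A * t + B / 2 * t ^ 2 := by
    refine image_norm_le_of_norm_deriv_right_le_deriv_boundary (B' := fun t => A + B * t)
      (fun t _ => ((hφ' t).sub_const _).continuousAt.continuousWithinAt)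
      (fun t _ => ((hφ' t).sub_const _).hasDerivWithinAt) (by simp)
      (fun t => (((hasDerivAt_id' t).const_mul A).add
        ((hasDerivAt_pow 2 t).const_mul (B / 2))).congr_deriv (by norm_num; ring))
      (fun t ht => hφ'' t (Ico_subset_Icc_self ht))
  have hφ_lin : ∀ t, HasDerivAt (fun s => φ s - φ 0 - s • φ' 0) (φ' t - φ' 0) t := fun t =>
    (((hφ t).sub_const (φ 0)).sub ((hasDerivAt_id t).smul_const (φ' 0))).congr_deriv
      (by rw [one_smul])
  have hvalue : ∀ t ∈ Icc (0 : ℝ) 1,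
      ‖φ t - φ 0 - t • φ' 0‖ ≤ A / 2 * t ^ 2 + B / 6 * t ^ 3 := by
    refine image_norm_le_of_norm_deriv_right_le_deriv_boundary
      (B' := fun t => A * t + B / 2 * t ^ 2)
      (fun t _ => (hφ_lin t).continuousAt.continuousWithinAt)
      (fun t _ => (hφ_lin t).hasDerivWithinAt) (by simp)
      (fun t => (((hasDerivAt_pow 2 t).const_mul (A / 2)).add
        ((hasDerivAt_pow 3 t).const_mul (B / 6))).congr_deriv (by norm_num; ring))
      (fun t ht => hderiv t (Ico_subset_Icc_self ht))
  simpa using hvalue 1 (right_mem_Icc.2 zero_le_one)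

theorem norm_fderiv_fderiv_apply_le (f : E → F) (x v w : E) :
    ‖fderiv ℝ (fderiv ℝ f) x v w‖ ≤ ‖iteratedFDeriv ℝ 2 f x‖ * ‖v‖ * ‖w‖ := by
  simpa [iteratedFDeriv_two_apply, Fin.prod_univ_two, mul_assoc] using
    (iteratedFDeriv ℝ 2 f x).le_opNorm ![v, w]

theorem norm_image_add_sub_sub_fderiv_le {f : E → F} (hf : ContDiff ℝ 2 f) {γ : ℝ} (a d : E)
    (hLip : ∀ x, ‖iteratedFDeriv ℝ 2 f x - iteratedFDeriv ℝ 2 f a‖ ≤ γ * ‖x - a‖) :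
    ‖f (a + d) - f a - fderiv ℝ f a d‖ ≤
      ‖iteratedFDeriv ℝ 2 f a‖ / 2 * ‖d‖ ^ 2 + γ / 6 * ‖d‖ ^ 3 := by
  set K := ‖iteratedFDeriv ℝ 2 f a‖
  have hline : ∀ t : ℝ, HasDerivAt (fun s : ℝ => a + s • d) d t := fun t => by
    simpa using ((hasDerivAt_id t).smul_const d).const_add a
  have hφ : ∀ t : ℝ, HasDerivAt (fun s => f (a + s • d)) (fderiv ℝ f (a + t • d) d) t :=
    fun t => ((hf.differentiable two_ne_zero).differentiableAt.hasFDerivAt).comp_hasDerivAt t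
      (hline t)
  have hφ' : ∀ t : ℝ, HasDerivAt (fun s => fderiv ℝ f (a + s • d) d)
      (fderiv ℝ (fderiv ℝ f) (a + t • d) d d) t := fun t =>
    (ContinuousLinearMap.apply ℝ F d).hasFDerivAt.comp_hasDerivAt t <|
      ((hf.fderiv_right le_rfl).differentiable one_ne_zero).differentiableAt.hasFDerivAt
        |>.comp_hasDerivAt t (hline t)
  have hφ'' : ∀ t ∈ Icc (0 : ℝ) 1,
      ‖fderiv ℝ (fderiv ℝ f) (a + t • d) d d‖ ≤ K * ‖d‖ ^ 2 + γ * ‖d‖ ^ 3 * t := by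
    intro t ht
    have hnorm : ‖iteratedFDeriv ℝ 2 f (a + t • d)‖ ≤ K + γ * (t * ‖d‖) := by
      have := hLip (a + t • d)
      rw [add_sub_cancel_left, norm_smul, Real.norm_of_nonneg ht.1] at this
      linarith [norm_le_insert' (iteratedFDeriv ℝ 2 f (a + t • d)) (iteratedFDeriv ℝ 2 f a)]
    calc ‖fderiv ℝ (fderiv ℝ f) (a + t • d) d d‖
        ≤ ‖iteratedFDeriv ℝ 2 f (a + t • d)‖ * ‖d‖ * ‖d‖ := norm_fderiv_fderiv_apply_le f _ d d
      _ ≤ (K + γ * (t * ‖d‖)) * ‖d‖ * ‖d‖ := by gcongr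
      _ = K * ‖d‖ ^ 2 + γ * ‖d‖ ^ 3 * t := by ring
  have hremainder := norm_sub_sub_deriv_le_of_norm_deriv2_le hφ hφ' hφ''
  simp only [one_smul, zero_smul, add_zero] at hremainder
  linarith

end TaylorRemainder

section GradientSlab

variable {E : Type*} [NormedAddCommGroup E] [InnerProductSpace ℝ E] [CompleteSpace E]

theorem abs_slope_sub_inner_gradient_le {f : E → ℝ} (hf : ContDiff ℝ 2 f) {γ : ℝ} (x y : E)
    (hLip : ∀ z, ‖iteratedFDeriv ℝ 2 f z - iteratedFDeriv ℝ 2 f x‖ ≤ γ * ‖z - x‖) :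
    |(f y - f x) / ‖y - x‖ - inner ℝ (gradient f x) (‖y - x‖⁻¹ • (y - x))| ≤
      1 / 2 * ‖y - x‖ * ‖iteratedFDeriv ℝ 2 f x‖ + 1 / 6 * ‖y - x‖ ^ 2 * γ := by
  set μ := ‖y - x‖
  have htaylor := norm_image_add_sub_sub_fderiv_le hf x (y - x) hLip
  rw [add_sub_cancel, Real.norm_eq_abs] at htaylor
  calc |(f y - f x) / μ - inner ℝ (gradient f x) (μ⁻¹ • (y - x))|
      = |μ⁻¹ * (f y - f x - fderiv ℝ f x (y - x))| := by
        rw [inner_smul_right, inner_gradient_left]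
        ring_nf
    _ = μ⁻¹ * |f y - f x - fderiv ℝ f x (y - x)| := by
        rw [abs_mul, abs_of_nonneg (by positivity)]
    _ ≤ μ⁻¹ * (‖iteratedFDeriv ℝ 2 f x‖ / 2 * μ ^ 2 + γ / 6 * μ ^ 3) := by gcongr
    _ = μ⁻¹ * μ * μ * (‖iteratedFDeriv ℝ 2 f x‖ / 2 + γ / 6 * μ) := by ring
    _ = 1 / 2 * μ * ‖iteratedFDeriv ℝ 2 f x‖ + 1 / 6 * μ ^ 2 * γ := by
        rw [inv_mul_mul_self]; ring

end GradientSlab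

theorem sage_slab_directional_error_general
    {D : ℕ}
    (f : EuclideanSpace ℝ (Fin D) → ℝ)
    (hf : ContDiff ℝ 2 f)
    (γH : ℝ)
    (hLip : ∀ x₁ x₂ : EuclideanSpace ℝ (Fin D),
      ‖iteratedFDeriv ℝ 2 f x₁ - iteratedFDeriv ℝ 2 f x₂‖ ≤ γH * ‖x₁ - x₂‖)
    (xi xj : EuclideanSpace ℝ (Fin D))
    (g : EuclideanSpace ℝ (Fin D))
    (hg : |(f xj - f xi) / ‖xj - xi‖ -
            (inner ℝ g ((‖xj - xi‖)⁻¹ • (xj - xi)) : ℝ)| ≤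
          (1 / 2) * ‖xj - xi‖ * ‖iteratedFDeriv ℝ 2 f xi‖ +
            (1 / 6) * ‖xj - xi‖ ^ 2 * γH) :
    |(inner ℝ (g - gradient f xi) ((‖xj - xi‖)⁻¹ • (xj - xi)) : ℝ)| ≤
      ‖xj - xi‖ * ‖iteratedFDeriv ℝ 2 f xi‖ + (1 / 3) * ‖xj - xi‖ ^ 2 * γH := by
  have hgrad := abs_slope_sub_inner_gradient_le hf xi xj (fun z => hLip z xi)
  rw [inner_sub_left]
  rw [abs_sub_comm] at hg
  linarith [abs_sub_le (inner ℝ g ((‖xj - xi‖)⁻¹ • (xj - xi)))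
    ((f xj - f xi) / ‖xj - xi‖) (inner ℝ (gradient f xi) ((‖xj - xi‖)⁻¹ • (xj - xi)))]

/-- Any vector in the gradient slab has directional error (w.r.t.
the true gradient) at most twice the slab half-width. -/
theorem sage_slab_directional_error
    {D : ℕ} (hD : 1 ≤ D)
    (f : EuclideanSpace ℝ (Fin D) → ℝ)
    (hf : ContDiff ℝ 2 f)
    (γH : ℝ) (hγH : 0 ≤ γH)
    (hLip : ∀ x₁ x₂ : EuclideanSpace ℝ (Fin D),
      ‖iteratedFDeriv ℝ 2 f x₁ - iteratedFDeriv ℝ 2 f x₂‖ ≤ γH * ‖x₁ - x₂‖)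
    (xi xj : EuclideanSpace ℝ (Fin D)) (hne : xi ≠ xj)
    (g : EuclideanSpace ℝ (Fin D))
    (hg : |(f xj - f xi) / ‖xj - xi‖ -
            (inner ℝ g ((‖xj - xi‖)⁻¹ • (xj - xi)) : ℝ)| ≤
          (1 / 2) * ‖xj - xi‖ * ‖iteratedFDeriv ℝ 2 f xi‖ +
            (1 / 6) * ‖xj - xi‖ ^ 2 * γH) :
    |(inner ℝ (g - gradient f xi) ((‖xj - xi‖)⁻¹ • (xj - xi)) : ℝ)| ≤
      ‖xj - xi‖ * ‖iteratedFDeriv ℝ 2 f xi‖ + (1 / 3) * ‖xj - xi‖ ^ 2 * γH :=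
  sage_slab_directional_error_general f hf γH hLip xi xj g hg
end
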